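/- Let D be a positive integer, let a ∈ ℝ^D with a_d > 0, let g : ℝ → ℝ be concave, nondecreasing and continuous, and set u(x) = g(∑_d a_d x_d). Let q, q' ∈ ℝ^D with 0 < q_d ≤ q'_d for all d. Then for every y ∈ 𝒟(u, q) there exists y' ∈ 𝒟(u, q') with u(y') ≤ u(y). -/

import Mathlib

/-- The demand set `𝒟(u, q)`: maximizers of the quasi-linear utility
`x ↦ u x - q·x` over the box `[0,1]^D`. -/
def demandSet {D : ℕ} (u : (Fin D → ℝ) → ℝ) (q : Fin D → ℝ) : Set (Fin D → ℝ) :=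
  {x | x ∈ Set.Icc (0 : Fin D → ℝ) 1 ∧
    ∀ y ∈ Set.Icc (0 : Fin D → ℝ) 1,
      u y - ∑ d, q d * y d ≤ u x - ∑ d, q d * x d}

/-!
Let `y'` be demanded at `q'` (a maximizer exists by compactness of the box). If `a ⬝ᵥ y' ≤ a ⬝ᵥ y`,
monotonicity of `g` finishes. Otherwise shift part of `y'` onto `y`: by the intermediate value
theorem there is `w ≤ y'` with `a ⬝ᵥ w = a ⬝ᵥ y` such that `y + y' - w`, which has the utility of
`y'`, stays in the box. Comparing `y` with `y + y' - w` at prices `q` and `y'` with `w` at prices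
`q' ≥ q` shows that `w` is demanded at `q'`, and `u w = u y`.
-/

open Set

theorem mem_demandSet_iff {D : ℕ} {u : (Fin D → ℝ) → ℝ} {q x : Fin D → ℝ} :
    x ∈ demandSet u q ↔ x ∈ Icc 0 1 ∧ ∀ y ∈ Icc (0 : Fin D → ℝ) 1, u y - q ⬝ᵥ y ≤ u x - q ⬝ᵥ x :=
  Iff.rfl

theorem demandSet_nonempty {D : ℕ} {u : (Fin D → ℝ) → ℝ} (hu : Continuous u) (q : Fin D → ℝ) :
    (demandSet u q).Nonempty := by
  obtain ⟨x, hx, hmax⟩ := isCompact_Icc.exists_isMaxOn (nonempty_Icc.2 zero_le_one)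
    (hu.sub (continuous_const.dotProduct continuous_id)).continuousOn
  exact ⟨x, hx, fun y hy => hmax hy⟩

/-- Optimality of `y` against `y + y' - w` and of `y'` against `w` squeeze
`u y + q' ⬝ᵥ (y' - w) ≤ u y' ≤ u y + q ⬝ᵥ (y' - w)`, so all three are equal. -/
theorem mem_demandSet_of_exchange {D : ℕ} {u : (Fin D → ℝ) → ℝ} {q q' y y' w : Fin D → ℝ}
    (hy : y ∈ demandSet u q) (hy' : y' ∈ demandSet u q') (hqq' : q ≤ q')
    (hw : w ∈ Icc 0 1) (hwy' : w ≤ y') (hz : y + y' - w ∈ Icc 0 1)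
    (huw : u w = u y) (huz : u (y + y' - w) = u y') :
    w ∈ demandSet u q' := by
  rw [mem_demandSet_iff] at hy hy' ⊢
  have hprice : q ⬝ᵥ (y' - w) ≤ q' ⬝ᵥ (y' - w) :=
    dotProduct_le_dotProduct_of_nonneg_right hqq' (sub_nonneg.2 hwy')
  have hyz := hy.2 _ hz
  have hy'w := hy'.2 _ hw
  refine ⟨hw, fun x hx => (hy'.2 x hx).trans ?_⟩
  rw [huz] at hyz
  rw [huw] at hy'w ⊢
  simp only [dotProduct_sub, dotProduct_add] at hprice hyz ⊢
  linarith

theorem exists_mem_Icc_dotProduct_eq {ι : Type*} [Fintype ι] {lo hi : ι → ℝ} (h : lo ≤ hi)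
    (a : ι → ℝ) {c : ℝ} (hc : c ∈ Icc (a ⬝ᵥ lo) (a ⬝ᵥ hi)) :
    ∃ w ∈ Icc lo hi, a ⬝ᵥ w = c :=
  (convex_Icc lo hi).isPreconnected.intermediate_value (left_mem_Icc.2 h) (right_mem_Icc.2 h)
    (continuous_const.dotProduct continuous_id).continuousOn hc

theorem exists_exchange_in_unit_box {ι : Type*} [Fintype ι] {a y y' : ι → ℝ} (ha : 0 ≤ a)
    (hy : y ∈ Icc 0 1) (hy' : y' ∈ Icc 0 1) (hyy' : a ⬝ᵥ y ≤ a ⬝ᵥ y') :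
    ∃ w ∈ Icc 0 1, w ≤ y' ∧ y + y' - w ∈ Icc 0 1 ∧ a ⬝ᵥ w = a ⬝ᵥ y := by
  simp only [mem_Icc, Pi.le_def, Pi.zero_apply, Pi.one_apply] at hy hy'
  have hlo_y : (y + y' - 1) ⊔ 0 ≤ y := fun i =>
    max_le (show y i + y' i - 1 ≤ y i by linarith [hy'.2 i]) (hy.1 i)
  have hlo_y' : (y + y' - 1) ⊔ 0 ≤ y' := fun i =>
    max_le (show y i + y' i - 1 ≤ y' i by linarith [hy.2 i]) (hy'.1 i)
  obtain ⟨w, ⟨hlo_w, hwy'⟩, haw⟩ := exists_mem_Icc_dotProduct_eq hlo_y' a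
    ⟨dotProduct_le_dotProduct_of_nonneg_left hlo_y ha, hyy'⟩
  have hw : ∀ i, y i + y' i - 1 ≤ w i ∧ 0 ≤ w i := fun i => max_le_iff.1 (hlo_w i)
  refine ⟨w, ⟨fun i => (hw i).2, fun i => (hwy' i).trans (hy'.2 i)⟩, hwy',
    ⟨fun i => ?_, fun i => ?_⟩, haw⟩
  · show 0 ≤ y i + y' i - w i
    linarith [hwy' i, hy.1 i]
  · show y i + y' i - w i ≤ 1
    linarith [(hw i).1]

theorem demand_utility_decreases_under_price_increase_general
    (D : ℕ)
    (a : Fin D → ℝ) (ha : ∀ d, 0 < a d)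
    (g : ℝ → ℝ)
    (hgmono : Monotone g)
    (hgcont : Continuous g)
    (q q' : Fin D → ℝ)
    (hqq' : ∀ d, q d ≤ q' d) :
    ∀ y ∈ demandSet (fun x => g (∑ d, a d * x d)) q,
      ∃ y' ∈ demandSet (fun x => g (∑ d, a d * x d)) q',
        g (∑ d, a d * y' d) ≤ g (∑ d, a d * y d) := by
  intro y hy
  obtain ⟨y', hy'⟩ :=
    demandSet_nonempty (hgcont.comp (continuous_const.dotProduct continuous_id)) q'
  by_cases hle : a ⬝ᵥ y' ≤ a ⬝ᵥ y
  · exact ⟨y', hy', hgmono hle⟩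
  obtain ⟨w, hw, hwy', hz, haw⟩ :=
    exists_exchange_in_unit_box (fun d => (ha d).le) hy.1 hy'.1 (not_le.1 hle).le
  have haz : a ⬝ᵥ (y + y' - w) = a ⬝ᵥ y' := by
    rw [dotProduct_sub, dotProduct_add, haw, add_sub_cancel_left]
  exact ⟨w, mem_demandSet_of_exchange hy hy' hqq' hw hwy' hz (congrArg g haw) (congrArg g haz),
    (congrArg g haw).le⟩

/-- for `u x = g (∑ d, a d * x d)` with `g` concave, nondecreasing and continuous,
increasing the price vector coordinatewise can only decrease the attained utility: for every
`y ∈ 𝒟(u, q)` there is `y' ∈ 𝒟(u, q')` with `u y' ≤ u y`, whenever `0 < q ≤ q'`. -/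
theorem demand_utility_decreases_under_price_increase
    (D : ℕ) (hD : 0 < D)
    (a : Fin D → ℝ) (ha : ∀ d, 0 < a d)
    (g : ℝ → ℝ)
    (hgconc : ConcaveOn ℝ Set.univ g)
    (hgmono : Monotone g)
    (hgcont : Continuous g)
    (q q' : Fin D → ℝ)
    (hq : ∀ d, 0 < q d) (hqq' : ∀ d, q d ≤ q' d) :
    ∀ y ∈ demandSet (fun x => g (∑ d, a d * x d)) q,
      ∃ y' ∈ demandSet (fun x => g (∑ d, a d * x d)) q',
        g (∑ d, a d * y' d) ≤ g (∑ d, a d * y d) :=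
  demand_utility_decreases_under_price_increase_general D a ha g hgmono hgcont q q' hqq'
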